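/- (Convergence of policy iteration, Theorem 1.) Let (π_t)_{t ∈ ℕ} be a sequence of deterministic policies such that for every t, π_{t+1} is greedy with respect to q_{π_t}, i.e., q_{π_t}(s, π_{t+1} s) = max_{a ∈ A} q_{π_t}(s, a) for all s, where q_{π_t}(s, a) = r s a + γ * ∑_{s'} P s a s' * v_{π_t} s'. Then there exists m ∈ ℕ such that for all t ≥ m the value functions coincide, v_{π_t} = v_{π_m}, and π_m is optimal: v_σ s ≤ v_{π_m} s for every deterministic policy σ : S → A and every state s ∈ S. -/

import Mathlib

/-!
Policy improvement rests on a comparison principle: a function `d` on a finite set with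
`d s ≤ γ · (average of d under a stochastic kernel)` and `0 ≤ γ < 1` is nonpositive, as one
sees at a maximum of `d`. Hence a subsolution of the Bellman equation of a policy lies below
every supersolution. Since `π (t + 1)` is greedy for `v t`, the value `v t` is a subsolution
for `π (t + 1)`, so the values increase. There are finitely many policies, so some policy
recurs, the values agree there, and the monotone sequence is constant for one step `m → m + 1`.
Then `v m` solves the Bellman optimality equation, which makes it a supersolution for every
policy, hence an upper bound for every value function, and in particular for all later `v t`.
-/

open Finset

theorem nonpos_of_le_discounted_average {S : Type*} [Fintype S] {p : S → S → ℝ} {γ : ℝ}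
    (hp0 : ∀ s s', 0 ≤ p s s') (hp1 : ∀ s, ∑ s', p s s' = 1) (hγ0 : 0 ≤ γ) (hγ1 : γ < 1)
    {d : S → ℝ} (h : ∀ s, d s ≤ γ * ∑ s', p s s' * d s') (s : S) : d s ≤ 0 := by
  obtain ⟨s₀, -, hmax⟩ := exists_max_image univ d ⟨s, mem_univ s⟩
  have hle_max : ∀ s', d s' ≤ d s₀ := fun s' => hmax s' (mem_univ s')
  have havg : ∑ s', p s₀ s' * d s' ≤ d s₀ := calc
    ∑ s', p s₀ s' * d s' ≤ ∑ s', p s₀ s' * d s₀ :=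
      sum_le_sum fun s' _ => mul_le_mul_of_nonneg_left (hle_max s') (hp0 s₀ s')
    _ = d s₀ := by rw [← sum_mul, hp1, one_mul]
  have hmax_le : d s₀ ≤ γ * d s₀ := (h s₀).trans (mul_le_mul_of_nonneg_left havg hγ0)
  have hmax_nonpos : d s₀ ≤ 0 := by nlinarith
  exact (hle_max s).trans hmax_nonpos

section MDP

variable {S A : Type*} [Fintype S]
  {P : S → A → S → ℝ} {r : S → A → ℝ} {γ : ℝ}

variable (P r γ) in
def qValue (u : S → ℝ) (s : S) (a : A) : ℝ :=
  r s a + γ * ∑ s', P s a s' * u s'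

theorem le_of_le_qValue_of_qValue_le (hP0 : ∀ s a s', 0 ≤ P s a s')
    (hP1 : ∀ s a, ∑ s', P s a s' = 1) (hγ0 : 0 ≤ γ) (hγ1 : γ < 1) (σ : S → A) {u w : S → ℝ}
    (hu : ∀ s, u s ≤ qValue P r γ u s (σ s)) (hw : ∀ s, qValue P r γ w s (σ s) ≤ w s) :
    u ≤ w := by
  intro s
  suffices (u - w) s ≤ 0 from sub_nonpos.mp this
  refine nonpos_of_le_discounted_average (p := fun s => P s (σ s))
    (fun _ _ => hP0 _ _ _) (fun _ => hP1 _ _) hγ0 hγ1 (fun s => ?_) s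
  have hsum : ∑ s', P s (σ s) s' * (u - w) s'
      = ∑ s', P s (σ s) s' * u s' - ∑ s', P s (σ s) s' * w s' := by
    simp only [Pi.sub_apply, mul_sub, sum_sub_distrib]
  have hus := hu s
  have hws := hw s
  rw [qValue] at hus hws
  rw [Pi.sub_apply, hsum]
  linarith

theorem eq_of_qValue_fixed (hP0 : ∀ s a s', 0 ≤ P s a s') (hP1 : ∀ s a, ∑ s', P s a s' = 1)
    (hγ0 : 0 ≤ γ) (hγ1 : γ < 1) (σ : S → A) {u w : S → ℝ}
    (hu : ∀ s, u s = qValue P r γ u s (σ s)) (hw : ∀ s, w s = qValue P r γ w s (σ s)) :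
    u = w :=
  le_antisymm
    (le_of_le_qValue_of_qValue_le hP0 hP1 hγ0 hγ1 σ (fun s => (hu s).le) (fun s => (hw s).ge))
    (le_of_le_qValue_of_qValue_le hP0 hP1 hγ0 hγ1 σ (fun s => (hw s).le) (fun s => (hu s).ge))

variable [Fintype A] [Nonempty A]

theorem le_of_greedy (hP0 : ∀ s a s', 0 ≤ P s a s') (hP1 : ∀ s a, ∑ s', P s a s' = 1)
    (hγ0 : 0 ≤ γ) (hγ1 : γ < 1) {σ σ' : S → A} {u w : S → ℝ}
    (hu : ∀ s, u s = qValue P r γ u s (σ s))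
    (hgreedy : ∀ s, qValue P r γ u s (σ' s) = univ.sup' univ_nonempty (qValue P r γ u s))
    (hw : ∀ s, w s = qValue P r γ w s (σ' s)) :
    u ≤ w := by
  refine le_of_le_qValue_of_qValue_le hP0 hP1 hγ0 hγ1 σ' (fun s => ?_) (fun s => (hw s).ge)
  rw [hgreedy, hu]
  exact le_sup' _ (mem_univ _)

theorem le_of_bellman_optimal (hP0 : ∀ s a s', 0 ≤ P s a s') (hP1 : ∀ s a, ∑ s', P s a s' = 1)
    (hγ0 : 0 ≤ γ) (hγ1 : γ < 1) {u : S → ℝ}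
    (hu : ∀ s, u s = univ.sup' univ_nonempty (qValue P r γ u s)) (σ : S → A) {w : S → ℝ}
    (hw : ∀ s, w s = qValue P r γ w s (σ s)) :
    w ≤ u := by
  refine le_of_le_qValue_of_qValue_le hP0 hP1 hγ0 hγ1 σ (fun s => (hw s).le) (fun s => ?_)
  rw [hu s]
  exact le_sup' _ (mem_univ _)

end MDP

theorem policy_iteration_converges_general
    {S A : Type*} [Fintype S] [Fintype A] [Nonempty A]
    (P : S → A → S → ℝ) (hP0 : ∀ s a s', 0 ≤ P s a s')
    (hP1 : ∀ s a, ∑ s', P s a s' = 1)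
    (r : S → A → ℝ) (γ : ℝ) (hγ0 : 0 < γ) (hγ1 : γ < 1)
    (π : ℕ → S → A) (v : ℕ → S → ℝ)
    (hv : ∀ t s, v t s = r s (π t s) + γ * ∑ s', P s (π t s) s' * v t s')
    (hgreedy : ∀ t s,
      r s (π (t + 1) s) + γ * ∑ s', P s (π (t + 1) s) s' * v t s'
        = Finset.univ.sup' Finset.univ_nonempty
            (fun a => r s a + γ * ∑ s', P s a s' * v t s')) :
    ∃ m : ℕ, (∀ t, m ≤ t → v t = v m) ∧
      ∀ (σ : S → A) (vσ : S → ℝ),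
        (∀ s, vσ s = r s (σ s) + γ * ∑ s', P s (σ s) s' * vσ s') →
        ∀ s, vσ s ≤ v m s := by
  have hmono : Monotone v := monotone_nat_of_le_succ fun t =>
    le_of_greedy hP0 hP1 hγ0.le hγ1 (hv t) (hgreedy t) (hv (t + 1))
  obtain ⟨m, n, hmn, hπ⟩ :=
    Set.finite_univ.exists_lt_map_eq_of_forall_mem (f := π) fun _ => Set.mem_univ _
  have hvmn : v m = v n :=
    eq_of_qValue_fixed hP0 hP1 hγ0.le hγ1 (π m) (hv m) (by rw [hπ]; exact hv n)
  have hstall : v (m + 1) = v m :=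
    le_antisymm (hvmn ▸ hmono hmn) (hmono m.le_succ)
  have hoptimal : ∀ s, v m s = univ.sup' univ_nonempty (qValue P r γ (v m) s) := by
    intro s
    calc v m s = qValue P r γ (v (m + 1)) s (π (m + 1) s) := hstall ▸ hv (m + 1) s
      _ = qValue P r γ (v m) s (π (m + 1) s) := by rw [hstall]
      _ = _ := hgreedy m s
  have hdominates : ∀ (σ : S → A) (vσ : S → ℝ),
      (∀ s, vσ s = qValue P r γ vσ s (σ s)) → vσ ≤ v m :=
    fun σ _ hσ => le_of_bellman_optimal hP0 hP1 hγ0.le hγ1 hoptimal σ hσ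
  exact ⟨m, fun t ht => le_antisymm (hdominates _ _ (hv t)) (hmono ht), hdominates⟩

/-- Convergence of policy iteration (Theorem 1): a policy iteration sequence
reaches, after finitely many steps, a policy whose value function is optimal
and is never changed afterwards. -/
theorem policy_iteration_converges
    {S A : Type*} [Fintype S] [Nonempty S] [Fintype A] [Nonempty A]
    (P : S → A → S → ℝ) (hP0 : ∀ s a s', 0 ≤ P s a s')
    (hP1 : ∀ s a, ∑ s', P s a s' = 1)
    (r : S → A → ℝ) (γ : ℝ) (hγ0 : 0 < γ) (hγ1 : γ < 1)
    (π : ℕ → S → A) (v : ℕ → S → ℝ)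
    (hv : ∀ t s, v t s = r s (π t s) + γ * ∑ s', P s (π t s) s' * v t s')
    (hgreedy : ∀ t s,
      r s (π (t + 1) s) + γ * ∑ s', P s (π (t + 1) s) s' * v t s'
        = Finset.univ.sup' Finset.univ_nonempty
            (fun a => r s a + γ * ∑ s', P s a s' * v t s')) :
    ∃ m : ℕ, (∀ t, m ≤ t → v t = v m) ∧
      ∀ (σ : S → A) (vσ : S → ℝ),
        (∀ s, vσ s = r s (σ s) + γ * ∑ s', P s (σ s) s' * vσ s') →
        ∀ s, vσ s ≤ v m s :=
  policy_iteration_converges_general P hP0 hP1 r γ hγ0 hγ1 π v hv hgreedy
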